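/- arXiv:1809.05918 — 5 statements merged into one kernel-verified Lean document; each statement's English description precedes it below -/
import Mathlib

section
/- Let λ₁, λ₂, λ₃ be real numbers with λ₁ + λ₂ + λ₃ = 0. Then for all real numbers b₁, b₂, b₃, one has |λ₁·b₁² + λ₂·b₂² + λ₃·b₃²| ≤ (√6/3)·√(λ₁² + λ₂² + λ₃²)·(b₁² + b₂² + b₃²). -/
/-!
If `λ₁ + λ₂ + λ₃ = 0` then `λ₁ = -(λ₂ + λ₃)`, and Cauchy–Schwarz gives
`λ₁² ≤ 2 (λ₂² + λ₃²)`, i.e. `λ₁² ≤ (2/3) ‖λ‖²`; the same holds for each entry. Hence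
`|∑ λᵢ bᵢ²| ≤ maxᵢ |λᵢ| · ∑ bᵢ² ≤ √(2/3) ‖λ‖ |b|²`.
-/

open Finset

theorem card_mul_sq_le_of_sum_eq_zero {ι : Type*} [DecidableEq ι] {s : Finset ι} {f : ι → ℝ}
    (hf : ∑ j ∈ s, f j = 0) {i : ι} (hi : i ∈ s) :
    #s * f i ^ 2 ≤ (#s - 1) * ∑ j ∈ s, f j ^ 2 := by
  have h_entry : f i = -∑ j ∈ s.erase i, f j := by
    rw [← add_sum_erase s f hi] at hf
    linarith
  have h_cs : f i ^ 2 ≤ (#s - 1) * ∑ j ∈ s.erase i, f j ^ 2 := by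
    calc f i ^ 2 = (∑ j ∈ s.erase i, f j) ^ 2 := by rw [h_entry, neg_sq]
      _ ≤ #(s.erase i) * ∑ j ∈ s.erase i, f j ^ 2 := sq_sum_le_card_mul_sum_sq
      _ = (#s - 1) * ∑ j ∈ s.erase i, f j ^ 2 := by
        rw [card_erase_of_mem hi, Nat.cast_pred (card_pos.2 ⟨i, hi⟩)]
  rw [← add_sum_erase s (fun j ↦ f j ^ 2) hi]
  linarith

theorem abs_le_sqrt_mul_sqrt_of_sum_eq_zero {ι : Type*} {s : Finset ι} {f : ι → ℝ}
    (hf : ∑ j ∈ s, f j = 0) {i : ι} (hi : i ∈ s) :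
    |f i| ≤ √((#s - 1) / #s) * √(∑ j ∈ s, f j ^ 2) := by
  classical
  have h_card : 0 < #s := card_pos.2 ⟨i, hi⟩
  have hs : (0 : ℝ) < #s := by exact_mod_cast h_card
  have hs' : (0 : ℝ) ≤ (#s - 1) / #s :=
    div_nonneg (sub_nonneg.2 (by exact_mod_cast h_card)) hs.le
  rw [← Real.sqrt_mul hs']
  apply Real.abs_le_sqrt
  rw [div_mul_eq_mul_div, le_div_iff₀ hs, mul_comm]
  exact card_mul_sq_le_of_sum_eq_zero hf hi

theorem abs_sum_mul_le_mul_sum {ι : Type*} {s : Finset ι} {l w : ι → ℝ} {M : ℝ}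
    (hl : ∀ i ∈ s, |l i| ≤ M) (hw : ∀ i ∈ s, 0 ≤ w i) :
    |∑ i ∈ s, l i * w i| ≤ M * ∑ i ∈ s, w i := by
  rw [mul_sum]
  refine (abs_sum_le_sum_abs _ _).trans (sum_le_sum fun i hi ↦ ?_)
  rw [abs_mul, abs_of_nonneg (hw i hi)]
  exact mul_le_mul_of_nonneg_right (hl i hi) (hw i hi)

theorem Real.sqrt_two_div_three : √(2 / 3) = √6 / 3 := by
  rw [show (2 / 3 : ℝ) = 6 / 3 ^ 2 by norm_num, Real.sqrt_div' _ (by positivity),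
    Real.sqrt_sq (by norm_num)]

theorem diag_tracefree_sharp_ineq
    (l1 l2 l3 : ℝ) (htr : l1 + l2 + l3 = 0) :
    ∀ b1 b2 b3 : ℝ,
      |l1 * b1 ^ 2 + l2 * b2 ^ 2 + l3 * b3 ^ 2| ≤
        (Real.sqrt 6 / 3) * Real.sqrt (l1 ^ 2 + l2 ^ 2 + l3 ^ 2) *
          (b1 ^ 2 + b2 ^ 2 + b3 ^ 2) := by
  intro b1 b2 b3
  set l : Fin 3 → ℝ := ![l1, l2, l3]
  have h_trace : ∑ i, l i = 0 := by simpa [l, Fin.sum_univ_three] using htr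
  have h_entry (i : Fin 3) (_ : i ∈ univ) : |l i| ≤ √6 / 3 * √(∑ j, l j ^ 2) := by
    have h := abs_le_sqrt_mul_sqrt_of_sum_eq_zero h_trace (mem_univ i)
    rwa [card_univ, Fintype.card_fin, show ((3 : ℕ) : ℝ) - 1 = 2 by norm_num,
      Nat.cast_ofNat, Real.sqrt_two_div_three] at h
  have h_sum := abs_sum_mul_le_mul_sum (w := ![b1 ^ 2, b2 ^ 2, b3 ^ 2]) h_entry
    (fun i _ ↦ by fin_cases i <;> simp [sq_nonneg])
  simpa [l, Fin.sum_univ_three, mul_assoc] using h_sum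
end

section
/- Let A be a 3×3 real symmetric matrix with trace zero. Then for every vector X ∈ ℝ³, |Xᵀ A X| ≤ (√6/3)·‖A‖·|X|², where ‖A‖ denotes the Frobenius norm of A (the square root of the sum of squares of the entries) and |X| the Euclidean norm of X. -/
/-!
Writing `q(X) = Xᵀ A X = ∑ᵢⱼ Aᵢⱼ XᵢXⱼ` as the Frobenius pairing of `A` with `XXᵀ`, trace-freeness
of `A` lets one replace `XXᵀ` by its trace-free part `XXᵀ - (|X|²/n) I`, whose squared Frobenius
norm is `(1 - 1/n)|X|⁴`. Cauchy–Schwarz then gives `|q(X)| ≤ √(1 - 1/n) ‖A‖ |X|²`, with equality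
when `A` is that trace-free part; for `n = 3` the constant is `√(2/3) = √6/3`.
-/

open Matrix Finset

namespace Matrix

variable {ι : Type*} [Fintype ι]

theorem sum_sum_sq_vecMulVec_self (X : ι → ℝ) :
    ∑ i, ∑ j, vecMulVec X X i j ^ 2 = (∑ i, X i ^ 2) ^ 2 := by
  rw [sq, sum_mul_sum]
  simp only [vecMulVec_apply, mul_pow]

theorem abs_sum_sum_mul_le (A B : Matrix ι ι ℝ) :
    |∑ i, ∑ j, A i j * B i j| ≤ √(∑ i, ∑ j, A i j ^ 2) * √(∑ i, ∑ j, B i j ^ 2) := by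
  rw [← Real.sqrt_mul (by positivity)]
  refine Real.abs_le_sqrt ?_
  simpa only [Fintype.sum_prod_type] using
    sum_mul_sq_le_sq_mul_sq univ (fun p : ι × ι => A p.1 p.2) (fun p => B p.1 p.2)

variable [DecidableEq ι]

noncomputable def traceFreePart (M : Matrix ι ι ℝ) : Matrix ι ι ℝ :=
  M - (M.trace / Fintype.card ι) • 1

theorem sum_sum_sq_traceFreePart (M : Matrix ι ι ℝ) :
    ∑ i, ∑ j, M.traceFreePart i j ^ 2 = ∑ i, ∑ j, M i j ^ 2 - M.trace ^ 2 / Fintype.card ι := by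
  rcases isEmpty_or_nonempty ι with h | h
  · simp
  have hn : (Fintype.card ι : ℝ) ≠ 0 := by positivity
  simp only [traceFreePart, sub_apply, smul_apply, smul_eq_mul, one_apply, sub_sq,
    sum_add_distrib, sum_sub_distrib, mul_ite, ite_pow, mul_one, mul_zero, ne_eq,
    OfNat.ofNat_ne_zero, not_false_eq_true, zero_pow, sum_ite_eq, mem_univ, if_true,
    ← sum_mul, ← mul_sum, sum_const, card_univ, nsmul_eq_mul, trace, diag]
  field_simp
  ring

theorem sum_sum_mul_traceFreePart_of_trace_eq_zero {A : Matrix ι ι ℝ} (hA : A.trace = 0)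
    (M : Matrix ι ι ℝ) :
    ∑ i, ∑ j, A i j * M.traceFreePart i j = ∑ i, ∑ j, A i j * M i j := by
  have hdiag : ∑ i, ∑ j, A i j * (1 : Matrix ι ι ℝ) i j = A.trace := by
    simp [one_apply, trace, diag]
  simp only [traceFreePart, sub_apply, smul_apply, smul_eq_mul, mul_sub, sum_sub_distrib,
    mul_left_comm _ (M.trace / _), ← mul_sum, hdiag, hA, mul_zero, sub_zero]

omit [DecidableEq ι] in
theorem dotProduct_mulVec_eq_sum_sum_mul_vecMulVec (A : Matrix ι ι ℝ) (X : ι → ℝ) :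
    X ⬝ᵥ A *ᵥ X = ∑ i, ∑ j, A i j * vecMulVec X X i j := by
  simp only [dotProduct, mulVec, mul_sum, vecMulVec_apply]
  exact sum_congr rfl fun i _ => sum_congr rfl fun j _ => by ring

theorem abs_dotProduct_mulVec_le_of_trace_eq_zero {A : Matrix ι ι ℝ} (hA : A.trace = 0)
    (X : ι → ℝ) :
    |X ⬝ᵥ A *ᵥ X| ≤ √(1 - 1 / Fintype.card ι) * √(∑ i, ∑ j, A i j ^ 2) * ∑ i, X i ^ 2 := by
  have hB : ∑ i, ∑ j, (vecMulVec X X).traceFreePart i j ^ 2 =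
      (1 - 1 / Fintype.card ι) * (∑ i, X i ^ 2) ^ 2 := by
    rw [sum_sum_sq_traceFreePart, sum_sum_sq_vecMulVec_self, trace_vecMulVec]
    simp only [dotProduct, ← sq]
    ring
  calc |X ⬝ᵥ A *ᵥ X|
      = |∑ i, ∑ j, A i j * (vecMulVec X X).traceFreePart i j| := by
        rw [dotProduct_mulVec_eq_sum_sum_mul_vecMulVec,
          sum_sum_mul_traceFreePart_of_trace_eq_zero hA]
    _ ≤ √(∑ i, ∑ j, A i j ^ 2) * √(∑ i, ∑ j, (vecMulVec X X).traceFreePart i j ^ 2) :=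
        abs_sum_sum_mul_le _ _
    _ = √(1 - 1 / Fintype.card ι) * √(∑ i, ∑ j, A i j ^ 2) * ∑ i, X i ^ 2 := by
        rw [hB, Real.sqrt_mul' _ (by positivity), Real.sqrt_sq (by positivity)]
        ring

end Matrix

open Matrix in
theorem tracefree_symmetric_sharp_ineq_general
    (A : Matrix (Fin 3) (Fin 3) ℝ) (htr : A.trace = 0) :
    ∀ X : Fin 3 → ℝ,
      |X ⬝ᵥ A.mulVec X| ≤
        (Real.sqrt 6 / 3) * Real.sqrt (∑ i, ∑ j, (A i j) ^ 2) *
          (∑ i, (X i) ^ 2) := by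
  intro X
  have hconst : √(1 - 1 / Fintype.card (Fin 3)) = √6 / 3 := by
    rw [Real.sqrt_eq_iff_mul_self_eq (by norm_num) (by positivity), div_mul_div_comm,
      Real.mul_self_sqrt (by norm_num)]
    norm_num
  simpa only [hconst] using abs_dotProduct_mulVec_le_of_trace_eq_zero htr X

open Matrix in
theorem tracefree_symmetric_sharp_ineq
    (A : Matrix (Fin 3) (Fin 3) ℝ) (hsymm : A.IsSymm) (htr : A.trace = 0) :
    ∀ X : Fin 3 → ℝ,
      |X ⬝ᵥ A.mulVec X| ≤
        (Real.sqrt 6 / 3) * Real.sqrt (∑ i, ∑ j, (A i j) ^ 2) *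
          (∑ i, (X i) ^ 2) :=
  tracefree_symmetric_sharp_ineq_general A htr
end

section
/- Let C ≥ 0 and let τ < τ′ < t be real numbers. Suppose v : ℝ → ℝ is continuous and nonnegative on [τ, t] and differentiable on [τ, t] with v′(s) ≤ C·v(s) for all s ∈ [τ, t]. Then v(t) ≤ (C + 1/(τ′ − τ))·∫_τ^t v(s) ds. -/
/-!
Multiply `v` by the linear weight `s - τ`, which vanishes at `τ`: the derivative of `(s - τ) v(s)`
is at most `(1 + C (t - τ)) v(s)` on `[τ, t]`, so integrating gives
`(t - τ) v(t) ≤ (1 + C (t - τ)) ∫_τ^t v` with no contribution from `v(τ)`. Dividing by `t - τ`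
and using `t - τ > τ' - τ` gives the claim.
-/

open Set

theorem sub_mul_le_one_add_mul_integral_of_deriv_le {a b C : ℝ} (hab : a ≤ b) (hC : 0 ≤ C)
    {v v' : ℝ → ℝ} (hcont : ContinuousOn v (Icc a b)) (hnonneg : ∀ s ∈ Ioo a b, 0 ≤ v s)
    (hderiv : ∀ s ∈ Ioo a b, HasDerivAt v (v' s) s) (hineq : ∀ s ∈ Ioo a b, v' s ≤ C * v s) :
    (b - a) * v b ≤ (1 + C * (b - a)) * ∫ s in a..b, v s := by
  have hweighted : ContinuousOn (fun s => (s - a) * v s) (Icc a b) :=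
    (continuousOn_id.sub continuousOn_const).mul hcont
  have key := intervalIntegral.sub_le_integral_of_hasDeriv_right_of_le hab hweighted
    (fun s hs => (((hasDerivAt_id s).sub_const a).mul (hderiv s hs)).hasDerivWithinAt)
    ((hcont.const_smul (1 + C * (b - a))).integrableOn_Icc)
    (φ := fun s => (1 + C * (b - a)) * v s) fun s hs => by
      have hv := hnonneg s hs
      have hweight : (s - a) * v' s ≤ (s - a) * (C * v s) :=
        mul_le_mul_of_nonneg_left (hineq s hs) (by linarith [hs.1])
      have hCv : C * (s - a) * v s ≤ C * (b - a) * v s := by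
        gcongr
        linarith [hs.2]
      simp only [id]
      linarith
  simpa [intervalIntegral.integral_const_mul] using key

theorem le_add_inv_mul_integral_of_deriv_le {a b C : ℝ} (hab : a < b) (hC : 0 ≤ C)
    {v v' : ℝ → ℝ} (hcont : ContinuousOn v (Icc a b)) (hnonneg : ∀ s ∈ Ioo a b, 0 ≤ v s)
    (hderiv : ∀ s ∈ Ioo a b, HasDerivAt v (v' s) s) (hineq : ∀ s ∈ Ioo a b, v' s ≤ C * v s) :
    v b ≤ (C + 1 / (b - a)) * ∫ s in a..b, v s := by
  have hba : 0 < b - a := sub_pos.mpr hab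
  have key := sub_mul_le_one_add_mul_integral_of_deriv_le hab.le hC hcont hnonneg hderiv hineq
  rw [← le_div_iff₀' hba] at key
  calc v b ≤ (1 + C * (b - a)) * (∫ s in a..b, v s) / (b - a) := key
    _ = (C + 1 / (b - a)) * ∫ s in a..b, v s := by field_simp; ring

theorem cutoff_pointwise_estimate
    (C τ τ' t : ℝ) (hC : 0 ≤ C) (h1 : τ < τ') (h2 : τ' < t)
    (v v' : ℝ → ℝ)
    (hcont : ContinuousOn v (Set.Icc τ t))
    (hnonneg : ∀ s ∈ Set.Icc τ t, 0 ≤ v s)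
    (hderiv : ∀ s ∈ Set.Icc τ t, HasDerivWithinAt v (v' s) (Set.Icc τ t) s)
    (hineq : ∀ s ∈ Set.Icc τ t, v' s ≤ C * v s) :
    v t ≤ (C + 1 / (τ' - τ)) * ∫ s in τ..t, v s := by
  have hτt : τ < t := h1.trans h2
  have hbound := le_add_inv_mul_integral_of_deriv_le hτt hC hcont
    (fun s hs => hnonneg s (Ioo_subset_Icc_self hs))
    (fun s hs => (hderiv s (Ioo_subset_Icc_self hs)).hasDerivAt (Icc_mem_nhds hs.1 hs.2))
    (fun s hs => hineq s (Ioo_subset_Icc_self hs))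
  have hint : 0 ≤ ∫ s in τ..t, v s := intervalIntegral.integral_nonneg hτt.le hnonneg
  have hinv : 1 / (t - τ) ≤ 1 / (τ' - τ) :=
    one_div_le_one_div_of_le (sub_pos.mpr h1) (by linarith)
  calc v t ≤ (C + 1 / (t - τ)) * ∫ s in τ..t, v s := hbound
    _ ≤ (C + 1 / (τ' - τ)) * ∫ s in τ..t, v s := by gcongr
end

section
/- Let C ≥ 0 and 0 < τ < t be real numbers. Suppose u, w : ℝ → ℝ are continuous and nonnegative on [0, t], u is differentiable on [0, t], and u′(s) ≤ C·u(s) − w(s) for all s ∈ [0, t]. Then u(t) + ∫_τ^t w(s) ds ≤ (C + 1/τ)·∫_0^t u(s) ds. -/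
/-!
Integrating `u' ≤ C u - w` against the cutoff `φ₁`, which rises linearly from `0` to `1` on
`[0, τ]` and stays `1` on `[τ, t]`, splits into two estimates. On `[0, τ]` the weighted function
`(s / τ) u(s)` has derivative at most `(C + 1/τ) u`, so `u(τ) ≤ (C + 1/τ) ∫₀^τ u`. On `[τ, t]`
the inequality integrates directly to `u(t) + ∫_τ^t w ≤ u(τ) + C ∫_τ^t u`. Adding them and using
`u ≥ 0` on `[τ, t]` gives the bound.
-/

open MeasureTheory Set

section

variable {u u' w : ℝ → ℝ} {a b C : ℝ}

theorem continuousOn_of_forall_hasDerivWithinAt {s : Set ℝ}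
    (hderiv : ∀ x ∈ s, HasDerivWithinAt u (u' x) s x) : ContinuousOn u s :=
  fun x hx => (hderiv x hx).continuousWithinAt

theorem sub_le_integral_of_hasDerivWithinAt_Icc_of_le {g : ℝ → ℝ} (hab : a ≤ b)
    (hderiv : ∀ x ∈ Icc a b, HasDerivWithinAt u (u' x) (Icc a b) x)
    (hg : IntegrableOn g (Icc a b)) (hle : ∀ x ∈ Ioo a b, u' x ≤ g x) :
    u b - u a ≤ ∫ x in a..b, g x :=
  intervalIntegral.sub_le_integral_of_hasDeriv_right_of_le hab
    (continuousOn_of_forall_hasDerivWithinAt hderiv)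
    (fun x hx => ((hderiv x (Ioo_subset_Icc_self hx)).hasDerivAt
      (Icc_mem_nhds hx.1 hx.2)).hasDerivWithinAt)
    hg hle

theorem le_mul_integral_of_deriv_le_mul_self (hC : 0 ≤ C) (hab : a < b)
    (hderiv : ∀ x ∈ Icc a b, HasDerivWithinAt u (u' x) (Icc a b) x)
    (hu : ∀ x ∈ Icc a b, 0 ≤ u x) (hle : ∀ x ∈ Ioo a b, u' x ≤ C * u x) :
    u b ≤ (C + 1 / (b - a)) * ∫ x in a..b, u x := by
  have hba : 0 < b - a := sub_pos.2 hab
  have hramp : ∀ x ∈ Icc a b, HasDerivWithinAt (fun s => (s - a) / (b - a) * u s)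
      (1 / (b - a) * u x + (x - a) / (b - a) * u' x) (Icc a b) x := fun x hx => by
    simpa [Pi.mul_def] using
      (((hasDerivWithinAt_id x _).sub_const a).div_const (b - a)).mul (hderiv x hx)
  have hint : IntegrableOn (fun x => (C + 1 / (b - a)) * u x) (Icc a b) :=
    ((continuousOn_of_forall_hasDerivWithinAt hderiv).integrableOn_Icc).const_mul _
  have key := sub_le_integral_of_hasDerivWithinAt_Icc_of_le hab.le hramp hint fun x hx => by
    have hθ : (x - a) / (b - a) ≤ 1 := (div_le_one hba).2 (by linarith [hx.2])
    have hθ₀ : 0 ≤ (x - a) / (b - a) := div_nonneg (by linarith [hx.1]) hba.le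
    have hCu : 0 ≤ C * u x := mul_nonneg hC (hu x (Ioo_subset_Icc_self hx))
    have := mul_le_mul_of_nonneg_left (hle x hx) hθ₀
    have := mul_le_of_le_one_left hCu hθ
    linarith
  simpa [div_self hba.ne', intervalIntegral.integral_const_mul] using key

theorem add_integral_le_add_mul_integral_of_deriv_le (hab : a ≤ b)
    (hderiv : ∀ x ∈ Icc a b, HasDerivWithinAt u (u' x) (Icc a b) x)
    (hw : ContinuousOn w (Icc a b)) (hle : ∀ x ∈ Ioo a b, u' x ≤ C * u x - w x) :
    u b + ∫ x in a..b, w x ≤ u a + C * ∫ x in a..b, u x := by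
  have hCu : ContinuousOn (fun x => C * u x) (Icc a b) :=
    continuousOn_const.mul (continuousOn_of_forall_hasDerivWithinAt hderiv)
  have key := sub_le_integral_of_hasDerivWithinAt_Icc_of_le (g := fun x => C * u x - w x) hab
    hderiv (hCu.sub hw).integrableOn_Icc hle
  rw [intervalIntegral.integral_sub (hCu.intervalIntegrable_of_Icc hab)
    (hw.intervalIntegrable_of_Icc hab), intervalIntegral.integral_const_mul] at key
  linarith

end

theorem cutoff_dissipation_estimate_general
    (C τ t : ℝ) (hC : 0 ≤ C) (hτ : 0 < τ) (hτt : τ < t)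
    (u u' w : ℝ → ℝ)
    (hwcont : ContinuousOn w (Set.Icc 0 t))
    (hunonneg : ∀ s ∈ Set.Icc 0 t, 0 ≤ u s)
    (hwnonneg : ∀ s ∈ Set.Icc 0 t, 0 ≤ w s)
    (hderiv : ∀ s ∈ Set.Icc 0 t, HasDerivWithinAt u (u' s) (Set.Icc 0 t) s)
    (hineq : ∀ s ∈ Set.Icc 0 t, u' s ≤ C * u s - w s) :
    u t + (∫ s in τ..t, w s) ≤ (C + 1 / τ) * ∫ s in (0:ℝ)..t, u s := by
  have hsub₁ : Icc 0 τ ⊆ Icc 0 t := Icc_subset_Icc le_rfl hτt.le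
  have hsub₂ : Icc τ t ⊆ Icc 0 t := Icc_subset_Icc hτ.le le_rfl
  have hramp : u τ ≤ (C + 1 / τ) * ∫ s in (0:ℝ)..τ, u s := by
    simpa only [sub_zero] using le_mul_integral_of_deriv_le_mul_self hC hτ
      (fun s hs => (hderiv s (hsub₁ hs)).mono hsub₁) (fun s hs => hunonneg s (hsub₁ hs))
      fun s hs => by
        have hs' := hsub₁ (Ioo_subset_Icc_self hs)
        linarith [hineq s hs', hwnonneg s hs']
  have hflat := add_integral_le_add_mul_integral_of_deriv_le hτt.le
    (fun s hs => (hderiv s (hsub₂ hs)).mono hsub₂) (hwcont.mono hsub₂)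
    fun s hs => hineq s (hsub₂ (Ioo_subset_Icc_self hs))
  have hu := continuousOn_of_forall_hasDerivWithinAt hderiv
  have hsplit := intervalIntegral.integral_add_adjacent_intervals
    ((hu.mono hsub₁).intervalIntegrable_of_Icc (μ := volume) hτ.le)
    ((hu.mono hsub₂).intervalIntegrable_of_Icc (μ := volume) hτt.le)
  have htail : 0 ≤ ∫ s in τ..t, u s :=
    intervalIntegral.integral_nonneg hτt.le fun s hs => hunonneg s (hsub₂ hs)
  rw [← hsplit]
  linarith [mul_nonneg (one_div_nonneg.2 hτ.le) htail]

theorem cutoff_dissipation_estimate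
    (C τ t : ℝ) (hC : 0 ≤ C) (hτ : 0 < τ) (hτt : τ < t)
    (u u' w : ℝ → ℝ)
    (hucont : ContinuousOn u (Set.Icc 0 t))
    (hwcont : ContinuousOn w (Set.Icc 0 t))
    (hunonneg : ∀ s ∈ Set.Icc 0 t, 0 ≤ u s)
    (hwnonneg : ∀ s ∈ Set.Icc 0 t, 0 ≤ w s)
    (hderiv : ∀ s ∈ Set.Icc 0 t, HasDerivWithinAt u (u' s) (Set.Icc 0 t) s)
    (hineq : ∀ s ∈ Set.Icc 0 t, u' s ≤ C * u s - w s) :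
    u t + (∫ s in τ..t, w s) ≤ (C + 1 / τ) * ∫ s in (0:ℝ)..t, u s :=
  cutoff_dissipation_estimate_general C τ t hC hτ hτt u u' w hwcont hunonneg hwnonneg hderiv hineq
end

section
/- Let T > 0, C > 0, c > 0 and ε ≥ 0. Suppose u, v, w : ℝ → ℝ are continuous and nonnegative on [0, T], u and v are differentiable on [0, T], and for all t ∈ [0, T]: (i) u′(t) ≤ C·u(t) − c·w(t); (ii) v′(t) ≤ C·v(t); (iii) v(t) ≤ √(u(t))·w(t); (iv) u(t) ≤ ε. Then for every t ∈ (0, T], v(t) ≤ c⁻¹·(C + 4/t)²·ε^{3/2}·t. -/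
/-!
Integrating (i) over `[0, t]` and using (iv) bounds `c ∫₀ᵗ w` by `ε (1 + C t)`, and (iii) with (iv)
gives `∫₀ᵗ v ≤ √ε ∫₀ᵗ w`. Integrating (ii) against the cutoff `s / t`, which vanishes at `0` and
equals `1` at `t`, gives `v t ≤ (C + 1/t) ∫₀ᵗ v`. Chaining the three,
`v t ≤ c⁻¹ (C + 1/t)² ε^{3/2} t`.
-/

open Set intervalIntegral

theorem mul_integral_le_of_hasDerivAt_le_mul_sub_mul {u u' w : ℝ → ℝ} {a b C c ε : ℝ}
    (hab : a ≤ b) (hC : 0 ≤ C) (hucont : ContinuousOn u (Icc a b)) (hwcont : ContinuousOn w (Icc a b))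
    (huderiv : ∀ s ∈ Ioo a b, HasDerivAt u (u' s) s)
    (hu' : ∀ s ∈ Ioo a b, u' s ≤ C * u s - c * w s)
    (hub : 0 ≤ u b) (hule : ∀ s ∈ Icc a b, u s ≤ ε) :
    c * ∫ s in a..b, w s ≤ ε * (1 + C * (b - a)) := by
  have huint : IntervalIntegrable u MeasureTheory.volume a b :=
    (hucont.mono (uIcc_of_le hab).subset).intervalIntegrable
  have hwint : IntervalIntegrable w MeasureTheory.volume a b :=
    (hwcont.mono (uIcc_of_le hab).subset).intervalIntegrable
  have hftc : u b - u a ≤ ∫ s in a..b, (C * u s - c * w s) :=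
    sub_le_integral_of_hasDeriv_right_of_le hab hucont
      (fun s hs => (huderiv s hs).hasDerivWithinAt)
      ((hucont.const_mul C).sub (hwcont.const_mul c)).integrableOn_Icc hu'
  have hu_int_le : ∫ s in a..b, u s ≤ (b - a) * ε := by
    simpa using integral_mono_on hab huint intervalIntegrable_const hule
  rw [integral_sub (huint.const_mul C) (hwint.const_mul c), integral_const_mul,
    integral_const_mul] at hftc
  nlinarith [hule a (left_mem_Icc.2 hab)]

theorem le_mul_integral_of_hasDerivAt_le_mul {v v' : ℝ → ℝ} {a b C : ℝ} (hab : a < b)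
    (hC : 0 ≤ C) (hvcont : ContinuousOn v (Icc a b))
    (hvderiv : ∀ s ∈ Ioo a b, HasDerivAt v (v' s) s)
    (hvnonneg : ∀ s ∈ Ioo a b, 0 ≤ v s) (hv' : ∀ s ∈ Ioo a b, v' s ≤ C * v s) :
    v b ≤ (C + (b - a)⁻¹) * ∫ s in a..b, v s := by
  have hba : 0 < b - a := sub_pos.2 hab
  set φ : ℝ → ℝ := fun s => (s - a) / (b - a)
  have hφderiv : ∀ s, HasDerivAt φ (b - a)⁻¹ s := fun s => by
    simpa [φ, div_eq_mul_inv] using ((hasDerivAt_id s).sub_const a).div_const (b - a)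
  have hftc := sub_le_integral_of_hasDeriv_right_of_le hab.le
    ((continuous_id.sub continuous_const).div_const (b - a) |>.continuousOn.mul hvcont)
    (fun s hs => ((hφderiv s).mul (hvderiv s hs)).hasDerivWithinAt)
    (hvcont.const_mul (C + (b - a)⁻¹)).integrableOn_Icc
    (fun s hs => by
      have hφ0 : 0 ≤ φ s := div_nonneg (sub_nonneg.2 hs.1.le) hba.le
      have hφ1 : φ s ≤ 1 := (div_le_one hba).2 (by linarith [hs.2])
      have := hvnonneg s hs
      nlinarith [mul_le_mul_of_nonneg_left (hv' s hs) hφ0,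
        mul_nonneg (mul_nonneg (sub_nonneg.2 hφ1) hC) this])
  simpa [φ, hba.ne', integral_const_mul] using hftc

theorem interior_smoothing_estimate_general
    (T C c ε : ℝ) (hC : 0 < C) (hc : 0 < c)
    (u v w u' v' : ℝ → ℝ)
    (hucont : ContinuousOn u (Set.Icc 0 T))
    (hvcont : ContinuousOn v (Set.Icc 0 T))
    (hwcont : ContinuousOn w (Set.Icc 0 T))
    (hunonneg : ∀ t ∈ Set.Icc 0 T, 0 ≤ u t)
    (hvnonneg : ∀ t ∈ Set.Icc 0 T, 0 ≤ v t)
    (hwnonneg : ∀ t ∈ Set.Icc 0 T, 0 ≤ w t)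
    (huderiv : ∀ t ∈ Set.Icc 0 T, HasDerivWithinAt u (u' t) (Set.Icc 0 T) t)
    (hvderiv : ∀ t ∈ Set.Icc 0 T, HasDerivWithinAt v (v' t) (Set.Icc 0 T) t)
    (hu : ∀ t ∈ Set.Icc 0 T, u' t ≤ C * u t - c * w t)
    (hv : ∀ t ∈ Set.Icc 0 T, v' t ≤ C * v t)
    (hinterp : ∀ t ∈ Set.Icc 0 T, v t ≤ Real.sqrt (u t) * w t)
    (husmall : ∀ t ∈ Set.Icc 0 T, u t ≤ ε) :
    ∀ t ∈ Set.Ioc 0 T, v t ≤ c⁻¹ * (C + 4 / t) ^ 2 * ε ^ ((3:ℝ)/2) * t := by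
  rintro t ⟨ht0, htT⟩
  have hsub : Icc 0 t ⊆ Icc 0 T := Icc_subset_Icc_right htT
  have hIoo : ∀ s ∈ Ioo 0 t, s ∈ Icc 0 T := fun s hs => hsub (Ioo_subset_Icc_self hs)
  have hderivAt {f f' : ℝ → ℝ} (hf : ∀ s ∈ Icc 0 T, HasDerivWithinAt f (f' s) (Icc 0 T) s) :
      ∀ s ∈ Ioo 0 t, HasDerivAt f (f' s) s := fun s hs =>
    (hf s (hIoo s hs)).hasDerivAt (Icc_mem_nhds hs.1 (hs.2.trans_le htT))
  have htmem : t ∈ Icc 0 T := hsub (right_mem_Icc.2 ht0.le)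
  have hε : 0 ≤ ε := (hunonneg t htmem).trans (husmall t htmem)
  have henergy : c * ∫ s in 0..t, w s ≤ ε * (1 + C * t) := by
    simpa using mul_integral_le_of_hasDerivAt_le_mul_sub_mul ht0.le hC.le (hucont.mono hsub)
      (hwcont.mono hsub) (hderivAt huderiv) (fun s hs => hu s (hIoo s hs)) (hunonneg t htmem)
      (fun s hs => husmall s (hsub hs))
  have hvw : ∫ s in 0..t, v s ≤ √ε * ∫ s in 0..t, w s := by
    rw [← integral_const_mul]
    refine integral_mono_on ht0.le ((hvcont.mono hsub).intervalIntegrable_of_Icc ht0.le)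
      (((hwcont.mono hsub).intervalIntegrable_of_Icc ht0.le).const_mul _) fun s hs => ?_
    exact (hinterp s (hsub hs)).trans <| mul_le_mul_of_nonneg_right
      (Real.sqrt_le_sqrt (husmall s (hsub hs))) (hwnonneg s (hsub hs))
  have hcutoff : v t ≤ (C + t⁻¹) * ∫ s in 0..t, v s := by
    simpa using le_mul_integral_of_hasDerivAt_le_mul ht0 hC.le (hvcont.mono hsub)
      (hderivAt hvderiv) (fun s hs => hvnonneg s (hIoo s hs)) (fun s hs => hv s (hIoo s hs))
  have hpow : ε ^ ((3:ℝ)/2) = ε * √ε := by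
    rw [Real.sqrt_eq_rpow, ← Real.rpow_one_add' hε (by norm_num)]; norm_num
  calc v t ≤ (C + t⁻¹) * (√ε * ∫ s in 0..t, w s) := hcutoff.trans (by gcongr)
    _ ≤ (C + t⁻¹) * (√ε * (c⁻¹ * (ε * (1 + C * t)))) := by
        gcongr
        exact (le_inv_mul_iff₀ hc).2 henergy
    _ = c⁻¹ * (C + t⁻¹) ^ 2 * ε ^ ((3:ℝ)/2) * t := by
        rw [hpow]; field_simp; ring
    _ ≤ c⁻¹ * (C + 4 / t) ^ 2 * ε ^ ((3:ℝ)/2) * t := by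
        gcongr
        rw [inv_eq_one_div]
        gcongr
        norm_num

theorem interior_smoothing_estimate
    (T C c ε : ℝ) (hT : 0 < T) (hC : 0 < C) (hc : 0 < c) (hε : 0 ≤ ε)
    (u v w u' v' : ℝ → ℝ)
    (hucont : ContinuousOn u (Set.Icc 0 T))
    (hvcont : ContinuousOn v (Set.Icc 0 T))
    (hwcont : ContinuousOn w (Set.Icc 0 T))
    (hunonneg : ∀ t ∈ Set.Icc 0 T, 0 ≤ u t)
    (hvnonneg : ∀ t ∈ Set.Icc 0 T, 0 ≤ v t)
    (hwnonneg : ∀ t ∈ Set.Icc 0 T, 0 ≤ w t)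
    (huderiv : ∀ t ∈ Set.Icc 0 T, HasDerivWithinAt u (u' t) (Set.Icc 0 T) t)
    (hvderiv : ∀ t ∈ Set.Icc 0 T, HasDerivWithinAt v (v' t) (Set.Icc 0 T) t)
    (hu : ∀ t ∈ Set.Icc 0 T, u' t ≤ C * u t - c * w t)
    (hv : ∀ t ∈ Set.Icc 0 T, v' t ≤ C * v t)
    (hinterp : ∀ t ∈ Set.Icc 0 T, v t ≤ Real.sqrt (u t) * w t)
    (husmall : ∀ t ∈ Set.Icc 0 T, u t ≤ ε) :
    ∀ t ∈ Set.Ioc 0 T, v t ≤ c⁻¹ * (C + 4 / t) ^ 2 * ε ^ ((3:ℝ)/2) * t :=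
  interior_smoothing_estimate_general T C c ε hC hc u v w u' v' hucont hvcont hwcont hunonneg
    hvnonneg hwnonneg huderiv hvderiv hu hv hinterp husmall
end
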